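/- Consider the mean-masked context-c2 distribution P'_{c2} over (x, y): y is uniform on {−1, +1} and, conditionally on y, independently x1 ~ N(μy, σ²I_d), x2 ~ N(0, (σ²/γ)I_d) (independent of y), x3 ~ N(−μ, η²I_d). Then the predictor w* = (1/(‖μ‖₂·√(1+γ²)))·[γμ, μ, 0_d] satisfies Acc_{P'_{c2}}(w*) = 0.5·erfc(−ρ1/√(1 + 1/γ³)). -/

import Mathlib

open MeasureTheory ProbabilityTheory Real Filter
open scoped ENNReal NNReal

noncomputable section

/-- Complementary error function `erfc x = (2/√π) ∫_x^∞ e^{−t²} dt`. -/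
def erfc (x : ℝ) : ℝ := 2 / Real.sqrt Real.pi * ∫ t in Set.Ioi x, Real.exp (-t ^ 2)

/-- A vector in `ℝ^d`. -/
abbrev Vec (d : ℕ) := Fin d → ℝ

/-- The input space `ℝ^{3d}`, viewed as three blocks `x = [x1, x2, x3]`. -/
abbrev Inp (d : ℕ) := Vec d × Vec d × Vec d

/-- Euclidean dot product on `ℝ^d`. -/
def dot {d : ℕ} (v w : Vec d) : ℝ := ∑ i, v i * w i

/-- Euclidean norm on `ℝ^d`. -/
def vnorm {d : ℕ} (v : Vec d) : ℝ := Real.sqrt (∑ i, v i ^ 2)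

/-- Euclidean norm on the full input space `ℝ^{3d}`. -/
def xnorm {d : ℕ} (x : Inp d) : ℝ :=
  Real.sqrt ((∑ i, x.1 i ^ 2) + (∑ i, x.2.1 i ^ 2) + ∑ i, x.2.2 i ^ 2)

/-- Value `wᵀx` of the linear predictor `w` at input `x`. -/
def pred {d : ℕ} (w x : Inp d) : ℝ := dot w.1 x.1 + dot w.2.1 x.2.1 + dot w.2.2 x.2.2

/-- Isotropic Gaussian `N(m, v·I_d)` on `ℝ^d` (product of coordinate Gaussians). -/
def gaussVec (d : ℕ) (m : Vec d) (v : ℝ) : Measure (Vec d) :=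
  Measure.pi fun i => gaussianReal (m i) (Real.toNNReal v)

/-- Conditional law of `x` given the label `y` in context `c1`:
`x1 ~ N(μy, σ²I)`, `x2 ~ N(μy, γσ²I)`, `x3 ~ N(μ, η²I)`, independent blocks. -/
def condX1 (d : ℕ) (μ : Vec d) (σ γ η : ℝ) (y : ℝ) : Measure (Inp d) :=
  (gaussVec d (fun i => μ i * y) (σ ^ 2)).prod
    ((gaussVec d (fun i => μ i * y) (γ * σ ^ 2)).prod
      (gaussVec d μ (η ^ 2)))

/-- Conditional law of `x` given the label `y` in context `c2`:
`x1 ~ N(μy, σ²I)`, `x2 ~ N(−μy, (σ²/γ)I)`, `x3 ~ N(−μ, η²I)`, independent blocks. -/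
def condX2 (d : ℕ) (μ : Vec d) (σ γ η : ℝ) (y : ℝ) : Measure (Inp d) :=
  (gaussVec d (fun i => μ i * y) (σ ^ 2)).prod
    ((gaussVec d (fun i => -μ i * y) (σ ^ 2 / γ)).prod
      (gaussVec d (fun i => -μ i) (η ^ 2)))

/-- Joint law of `(x, y)`: `y` uniform on `{−1, 1}`, then `x ~ cond y`. -/
def jointOf {d : ℕ} (cond : ℝ → Measure (Inp d)) : Measure (Inp d × ℝ) :=
  (2 : ℝ≥0∞)⁻¹ • (cond 1).prod (Measure.dirac (1 : ℝ))
    + (2 : ℝ≥0∞)⁻¹ • (cond (-1)).prod (Measure.dirac (-1 : ℝ))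

/-- The context-`c1` distribution over `(x, y)`. -/
def Pc1 (d : ℕ) (μ : Vec d) (σ γ η : ℝ) : Measure (Inp d × ℝ) :=
  jointOf (condX1 d μ σ γ η)

/-- The context-`c2` distribution over `(x, y)`. -/
def Pc2 (d : ℕ) (μ : Vec d) (σ γ η : ℝ) : Measure (Inp d × ℝ) :=
  jointOf (condX2 d μ σ γ η)

/-- Accuracy `Acc_P(w) = P(sign(wᵀx) = y)` of linear predictor `w` under joint law `P`. -/
def AccP {d : ℕ} (P : Measure (Inp d × ℝ)) (w : Inp d) : ℝ :=
  (P {p | Real.sign (pred w p.1) = p.2}).toReal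

/-- Norm-bounded linear predictors `W1 = {w ∈ ℝ^{3d} : ‖w‖₂ ≤ 1}`. -/
def W1 (d : ℕ) : Set (Inp d) := {w | xnorm w ≤ 1}

/-- Population exponential loss `E_P[exp(−y·wᵀx)]`. -/
def expLoss {d : ℕ} (P : Measure (Inp d × ℝ)) (w : Inp d) : ℝ :=
  ∫ p, Real.exp (-(p.2 * pred w p.1)) ∂P

end

/-- Conditional law of `x` given `y` in the mean-masked context `c2`:
`x1 ~ N(μy, σ²I)`, `x2 ~ N(0, (σ²/γ)I)` independent of `y`, `x3 ~ N(−μ, η²I)`. -/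
noncomputable def condX2masked (d : ℕ) (μ : Vec d) (σ γ η : ℝ) (y : ℝ) : Measure (Inp d) :=
  (gaussVec d (fun i => μ i * y) (σ ^ 2)).prod
    ((gaussVec d (fun _ => 0) (σ ^ 2 / γ)).prod
      (gaussVec d (fun i => -μ i) (η ^ 2)))

/-- The mean-masked context-`c2` distribution `P'_c2`. -/
noncomputable def Pc2masked (d : ℕ) (μ : Vec d) (σ γ η : ℝ) : Measure (Inp d × ℝ) :=
  jointOf (condX2masked d μ σ γ η)

/-!
Under either label `y`, the score `wᵀx` is a linear functional of independent isotropic Gaussian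
blocks, hence a real Gaussian `N(y·m, v)` with `m = c γ ‖μ‖²` and
`v = c² ‖μ‖² (γ² σ² + σ²/γ)`, where `c` is the normalising factor of `w*`: the masked block `x₂`
contributes variance but no mean, and `x₃` is weighted by `0`. The prediction is correct exactly
when the score has the sign of `y`, which for both labels has probability `½ erfc(-m/√(2v))`;
the factor `c` cancels in `m/√(2v) = ρ₁/√(1 + 1/γ³)`.
-/

lemma measurable_dot {d : ℕ} (a : Vec d) : Measurable (dot a) := by
  unfold dot
  fun_prop

lemma measurable_pred {d : ℕ} (w : Inp d) : Measurable (pred w) := by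
  unfold pred
  have := measurable_dot w.1
  have := measurable_dot w.2.1
  have := measurable_dot w.2.2
  fun_prop

lemma dot_self_nonneg {d : ℕ} (a : Vec d) : 0 ≤ dot a a :=
  Finset.sum_nonneg fun i _ => mul_self_nonneg (a i)

lemma dot_self_pos {d : ℕ} {a : Vec d} (ha : a ≠ 0) : 0 < dot a a := by
  obtain ⟨i, hi⟩ := Function.ne_iff.mp ha
  exact Finset.sum_pos' (fun j _ => mul_self_nonneg (a j))
    ⟨i, Finset.mem_univ i, mul_self_pos.mpr hi⟩

lemma vnorm_eq_sqrt_dot {d : ℕ} (a : Vec d) : vnorm a = √(dot a a) := by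
  simp only [vnorm, dot, sq]

lemma Real.sign_eq_one_iff {t : ℝ} : Real.sign t = 1 ↔ 0 < t := by
  rcases lt_trichotomy t 0 with h | rfl | h
  · norm_num [Real.sign_of_neg h, h.not_gt]
  · simp
  · simp [Real.sign_of_pos h, h]

lemma Real.sign_eq_neg_one_iff {t : ℝ} : Real.sign t = -1 ↔ t < 0 := by
  rcases lt_trichotomy t 0 with h | rfl | h
  · simp [Real.sign_of_neg h, h]
  · simp
  · norm_num [Real.sign_of_pos h, h.not_gt]

lemma gaussianReal_prod_map_add {α β : Type*} [MeasurableSpace α] [MeasurableSpace β]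
    {μ : Measure α} {ν : Measure β} [SFinite μ] [SFinite ν] {f : α → ℝ} {g : β → ℝ}
    (hf : Measurable f) (hg : Measurable g) {m₁ m₂ : ℝ} {v₁ v₂ : ℝ≥0}
    (hμ : μ.map f = gaussianReal m₁ v₁) (hν : ν.map g = gaussianReal m₂ v₂) :
    (μ.prod ν).map (fun p => f p.1 + g p.2) = gaussianReal (m₁ + m₂) (v₁ + v₂) := by
  have : (fun p : α × β => f p.1 + g p.2) = (fun q : ℝ × ℝ => q.1 + q.2) ∘ Prod.map f g := rfl
  rw [this, ← Measure.map_map measurable_add (hf.prodMap hg), ← Measure.map_prod_map _ _ hf hg,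
    hμ, hν, ← gaussianReal_conv_gaussianReal, Measure.conv]

lemma pi_gaussianReal_map_sum_mul : ∀ {n : ℕ} (a m : Fin n → ℝ) (v : Fin n → ℝ≥0),
    (Measure.pi fun i => gaussianReal (m i) (v i)).map (fun x => ∑ i, a i * x i)
      = gaussianReal (∑ i, a i * m i) (∑ i, ⟨a i ^ 2, sq_nonneg _⟩ * v i)
  | 0, _, _, _ => by simp [gaussianReal_zero_var]
  | n + 1, a, m, v => by
    have hsplit : (fun x : Fin (n + 1) → ℝ => ∑ i, a i * x i)
        = (fun p : ℝ × (Fin n → ℝ) => a 0 * p.1 + ∑ j, a j.succ * p.2 j)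
          ∘ MeasurableEquiv.piFinSuccAbove (fun _ => ℝ) 0 := by
      funext x
      simp [Fin.sum_univ_succ, Fin.tail]
    have htail : Measurable fun y : Fin n → ℝ => ∑ j, a j.succ * y j := by fun_prop
    rw [hsplit, ← Measure.map_map (by fun_prop) (MeasurableEquiv.measurable _),
      (measurePreserving_piFinSuccAbove (fun i => gaussianReal (m i) (v i)) 0).map_eq,
      gaussianReal_prod_map_add (measurable_const_mul _) htail (gaussianReal_map_const_mul _)
        (pi_gaussianReal_map_sum_mul _ _ _), Fin.sum_univ_succ, Fin.sum_univ_succ]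
    rfl

instance {d : ℕ} (m : Vec d) (v : ℝ) : IsProbabilityMeasure (gaussVec d m v) := by
  unfold gaussVec
  infer_instance

lemma gaussVec_map_dot {d : ℕ} (a m : Vec d) {v : ℝ} (hv : 0 ≤ v) :
    (gaussVec d m v).map (dot a) = gaussianReal (dot a m) (dot a a * v).toNNReal := by
  unfold gaussVec dot
  rw [pi_gaussianReal_map_sum_mul, Finset.sum_mul,
    Real.toNNReal_sum_of_nonneg fun i _ => mul_nonneg (mul_self_nonneg _) hv]
  congr 1
  refine Finset.sum_congr rfl fun i _ => ?_
  rw [Real.toNNReal_mul (mul_self_nonneg _), ← sq, Real.toNNReal_of_nonneg (sq_nonneg _)]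
  rfl

lemma gaussVec_prod_map_pred {d : ℕ} (w : Inp d) (m₁ m₂ m₃ : Vec d) {v₁ v₂ v₃ : ℝ}
    (hv₁ : 0 ≤ v₁) (hv₂ : 0 ≤ v₂) (hv₃ : 0 ≤ v₃) :
    ((gaussVec d m₁ v₁).prod ((gaussVec d m₂ v₂).prod (gaussVec d m₃ v₃))).map (pred w)
      = gaussianReal (pred w (m₁, m₂, m₃))
          (dot w.1 w.1 * v₁ + dot w.2.1 w.2.1 * v₂ + dot w.2.2 w.2.2 * v₃).toNNReal := by
  have h₂₃ := gaussianReal_prod_map_add (measurable_dot w.2.1) (measurable_dot w.2.2)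
    (gaussVec_map_dot w.2.1 m₂ hv₂) (gaussVec_map_dot w.2.2 m₃ hv₃)
  have h := gaussianReal_prod_map_add (g := fun p : Vec d × Vec d => dot w.2.1 p.1 + dot w.2.2 p.2)
    (measurable_dot w.1) (by have := measurable_dot w.2.1; have := measurable_dot w.2.2; fun_prop)
    (gaussVec_map_dot w.1 m₁ hv₁) h₂₃
  have hpred : pred w = fun x => dot w.1 x.1 + (dot w.2.1 x.2.1 + dot w.2.2 x.2.2) :=
    funext fun x => add_assoc _ _ _
  have h₁ := mul_nonneg (dot_self_nonneg w.1) hv₁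
  have h₂ := mul_nonneg (dot_self_nonneg w.2.1) hv₂
  have h₃ := mul_nonneg (dot_self_nonneg w.2.2) hv₃
  rw [hpred, h, Real.toNNReal_add (add_nonneg h₁ h₂) h₃, Real.toNNReal_add h₁ h₂, add_assoc]

lemma condX2masked_map_pred {d : ℕ} (μ : Vec d) {γ : ℝ} (hγ : 0 ≤ γ) (σ η c y : ℝ) :
    (condX2masked d μ σ γ η y).map (pred (c • ((γ • μ, μ, 0) : Inp d)))
      = gaussianReal (c * γ * dot μ μ * y)
          (c ^ 2 * dot μ μ * (γ ^ 2 * σ ^ 2 + σ ^ 2 / γ)).toNNReal := by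
  rw [condX2masked, gaussVec_prod_map_pred _ _ _ _ (sq_nonneg σ) (by positivity) (sq_nonneg η)]
  congr 2
  · simp only [pred, dot, Prod.smul_mk, smul_zero, Pi.smul_apply, smul_eq_mul, mul_zero,
      Finset.sum_const_zero, add_zero, Pi.zero_apply, mul_neg, zero_mul, neg_zero, Finset.mul_sum,
      Finset.sum_mul]
    exact Finset.sum_congr rfl fun i _ => by ring
  · simp only [dot, Prod.smul_mk, smul_zero, Pi.smul_apply, smul_eq_mul, Finset.sum_mul,
      Pi.zero_apply, mul_zero, Finset.sum_const_zero, zero_mul, add_zero, Finset.mul_sum]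
    rw [← Finset.sum_add_distrib]
    exact Finset.sum_congr rfl fun i _ => by ring

instance {d : ℕ} (μ : Vec d) (σ γ η y : ℝ) : IsProbabilityMeasure (condX2masked d μ σ γ η y) := by
  unfold condX2masked
  infer_instance

lemma erfc_nonneg (x : ℝ) : 0 ≤ erfc x :=
  mul_nonneg (by positivity) (integral_nonneg fun _ => (Real.exp_pos _).le)

lemma gaussianReal_Ioi_eq_erfc (t : ℝ) :
    gaussianReal 0 2⁻¹ (Set.Ioi t) = ENNReal.ofReal (2⁻¹ * erfc t) := by
  have hpdf : ∀ x, gaussianPDFReal 0 2⁻¹ x = (√π)⁻¹ * rexp (-x ^ 2) := by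
    intro x
    simp only [gaussianPDFReal, NNReal.coe_inv, NNReal.coe_ofNat, sub_zero]
    congr 2
    · congr 1
      ring
    · field_simp
  rw [gaussianReal_apply_eq_integral _ (by norm_num), erfc]
  simp_rw [hpdf]
  rw [integral_const_mul]
  ring_nf

lemma gaussianReal_Ioi_zero (m : ℝ) {v : ℝ≥0} (hv : v ≠ 0) :
    gaussianReal m v (Set.Ioi 0) = ENNReal.ofReal (2⁻¹ * erfc (-(m / √(2 * v)))) := by
  set s := √(2 * v)
  have hs : 0 < s := Real.sqrt_pos.mpr (by positivity)
  have hstd : (gaussianReal m v).map (fun x => (x - m) / s) = gaussianReal 0 2⁻¹ := by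
    rw [show (fun x => (x - m) / s) = (· / s) ∘ (· - m) from rfl,
      ← Measure.map_map (measurable_div_const s) (measurable_sub_const m),
      gaussianReal_map_sub_const, gaussianReal_map_div_const, sub_self, zero_div]
    congr 1
    ext
    simp only [NNReal.coe_div, NNReal.coe_mk, NNReal.coe_inv, NNReal.coe_ofNat, s,
      Real.sq_sqrt (by positivity : (0 : ℝ) ≤ 2 * v)]
    field_simp
  have hpre : (fun x => (x - m) / s) ⁻¹' Set.Ioi (-(m / s)) = Set.Ioi 0 := by
    ext x
    simp only [Set.mem_preimage, Set.mem_Ioi, ← neg_div, div_lt_div_iff_of_pos_right hs]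
    constructor <;> intro <;> linarith
  rw [← hpre, ← Measure.map_apply (by fun_prop) measurableSet_Ioi, hstd, gaussianReal_Ioi_eq_erfc]

lemma gaussianReal_neg_Iio_zero (m : ℝ) (v : ℝ≥0) :
    gaussianReal (-m) v (Set.Iio 0) = gaussianReal m v (Set.Ioi 0) := by
  rw [← gaussianReal_map_neg, Measure.map_apply measurable_neg measurableSet_Iio]
  congr 1
  ext x
  simp

lemma AccP_jointOf_eq_erfc {d : ℕ} (cond : ℝ → Measure (Inp d)) [∀ y, SFinite (cond y)]
    (w : Inp d) {m : ℝ} {v : ℝ≥0} (hv : v ≠ 0)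
    (hpos : (cond 1).map (pred w) = gaussianReal m v)
    (hneg : (cond (-1)).map (pred w) = gaussianReal (-m) v) :
    AccP (jointOf cond) w = 2⁻¹ * erfc (-(m / √(2 * v))) := by
  have hlabel : ∀ y, ((cond y).prod (Measure.dirac y)) {p | Real.sign (pred w p.1) = p.2}
      = cond y (pred w ⁻¹' {t | Real.sign t = y}) := by
    intro y
    rw [Measure.prod_dirac, (measurableEmbedding_prod_mk_right y).map_apply]
    rfl
  have hcorrect₁ : cond 1 (pred w ⁻¹' {t | Real.sign t = 1})
      = ENNReal.ofReal (2⁻¹ * erfc (-(m / √(2 * v)))) := by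
    rw [show {t : ℝ | Real.sign t = 1} = Set.Ioi 0 from Set.ext fun _ => Real.sign_eq_one_iff,
      ← Measure.map_apply (measurable_pred w) measurableSet_Ioi, hpos, gaussianReal_Ioi_zero m hv]
  have hcorrect₂ : cond (-1) (pred w ⁻¹' {t | Real.sign t = -1})
      = ENNReal.ofReal (2⁻¹ * erfc (-(m / √(2 * v)))) := by
    rw [show {t : ℝ | Real.sign t = -1} = Set.Iio 0 from Set.ext fun _ => Real.sign_eq_neg_one_iff,
      ← Measure.map_apply (measurable_pred w) measurableSet_Iio, hneg, gaussianReal_neg_Iio_zero,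
      gaussianReal_Ioi_zero m hv]
  rw [AccP, jointOf, Measure.add_apply, Measure.smul_apply, Measure.smul_apply, hlabel, hlabel,
    hcorrect₁, hcorrect₂, ← add_smul, ENNReal.inv_two_add_inv_two, one_smul,
    ENNReal.toReal_ofReal (mul_nonneg (by norm_num) (erfc_nonneg _))]

lemma mean_div_sqrt_two_var_eq {c S σ γ : ℝ} (hc : 0 < c) (hS : 0 < S) (hσ : 0 < σ)
    (hγ : 0 < γ) :
    c * γ * S / √(2 * (c ^ 2 * S * (γ ^ 2 * σ ^ 2 + σ ^ 2 / γ)))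
      = √S / (√2 * σ) / √(1 + 1 / γ ^ 3) := by
  rw [← pow_left_inj₀ (by positivity) (by positivity) two_ne_zero]
  simp only [div_pow, mul_pow, Real.sq_sqrt (by positivity : (0 : ℝ) ≤ 2), Real.sq_sqrt hS.le]
  rw [Real.sq_sqrt (by positivity), Real.sq_sqrt (by positivity)]
  field_simp

theorem enp_accuracy_on_masked_c2_general (d : ℕ) (μ : Vec d) (hμ : μ ≠ 0)
    (σ γ η : ℝ) (hσ : 0 < σ) (hγ : 0 < γ) :
    AccP (Pc2masked d μ σ γ η)
        ((1 / (vnorm μ * Real.sqrt (1 + γ ^ 2))) • ((γ • μ, μ, (0 : Vec d)) : Inp d))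
      = 0.5 * erfc (-((vnorm μ / (Real.sqrt 2 * σ)) / Real.sqrt (1 + 1 / γ ^ 3))) := by
  set c := 1 / (vnorm μ * Real.sqrt (1 + γ ^ 2))
  have hS : 0 < dot μ μ := dot_self_pos hμ
  have hc : 0 < c := by
    have : 0 < vnorm μ := by rw [vnorm_eq_sqrt_dot]; positivity
    positivity
  have hV : 0 < c ^ 2 * dot μ μ * (γ ^ 2 * σ ^ 2 + σ ^ 2 / γ) := by positivity
  have hlaw := condX2masked_map_pred μ hγ.le σ η c
  rw [Pc2masked, AccP_jointOf_eq_erfc _ _ (Real.toNNReal_pos.mpr hV).ne'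
    (by simpa using hlaw 1) (by simpa using hlaw (-1)), Real.coe_toNNReal _ hV.le,
    mean_div_sqrt_two_var_eq hc hS hσ hγ, ← vnorm_eq_sqrt_dot]
  norm_num

theorem enp_accuracy_on_masked_c2 (d : ℕ) (hd : 1 ≤ d) (μ : Vec d) (hμ : μ ≠ 0)
    (σ γ η : ℝ) (hσ : 0 < σ) (hγ : 0 < γ) (hη : 0 < η) :
    AccP (Pc2masked d μ σ γ η)
        ((1 / (vnorm μ * Real.sqrt (1 + γ ^ 2))) • ((γ • μ, μ, (0 : Vec d)) : Inp d))
      = 0.5 * erfc (-((vnorm μ / (Real.sqrt 2 * σ)) / Real.sqrt (1 + 1 / γ ^ 3))) :=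
  enp_accuracy_on_masked_c2_general d μ hμ σ γ η hσ hγ
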